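/- If (X,Y) is a random pair with joint pmf f^M, then the Pearson correlation coefficient of the indicator random variables 1{X>0} and 1{Y>0} equals √(13/19) = 13/√247 (≈ 0.8272). -/
import Mathlib


open scoped BigOperators

noncomputable section

namespace DelayedClaims

/-- High-correlation joint pmf: `f^H(x,x) = (1/6)(5/6)^x` and `f^H(x,y) = 0` for `x ≠ y`. -/
def fH (x y : ℕ) : ℝ := if x = y then (1 / 6 : ℝ) * (5 / 6) ^ x else 0

/-- Low-correlation joint pmf: `f^L(0,0) = 1/6`, `f^L(x,y) = (1/6)(5/6)^x (1/7)(6/7)^y`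
for `x ≥ 1`, `y ≥ 0`, and `f^L(0,y) = 0` for `y ≥ 1`. -/
def fL (x y : ℕ) : ℝ :=
  if x = 0 then (if y = 0 then (1 / 6 : ℝ) else 0)
  else (1 / 6 : ℝ) * (5 / 6) ^ x * ((1 / 7) * (6 / 7) ^ y)

/-- Moderate-correlation joint pmf: `f^M = (1/2) f^H + (1/2) f^L`. -/
def fM (x y : ℕ) : ℝ := (1 / 2) * fH x y + (1 / 2) * fL x y

/-- Expectation of `g(X,Y)` when `(X,Y)` has joint pmf `f`. -/
def Emom (f g : ℕ → ℕ → ℝ) : ℝ := ∑' p : ℕ × ℕ, g p.1 p.2 * f p.1 p.2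

/-- Covariance of `g(X,Y)` and `h(X,Y)` when `(X,Y)` has joint pmf `f`. -/
def covM (f g h : ℕ → ℕ → ℝ) : ℝ :=
  Emom f (fun x y => g x y * h x y) - Emom f g * Emom f h

/-- Variance of `g(X,Y)` when `(X,Y)` has joint pmf `f`. -/
def varM (f g : ℕ → ℕ → ℝ) : ℝ := Emom f (fun x y => g x y ^ 2) - (Emom f g) ^ 2

/-- Pearson correlation coefficient of `g(X,Y)` and `h(X,Y)` when `(X,Y)` has
joint pmf `f`. -/
def pearson (f g h : ℕ → ℕ → ℝ) : ℝ :=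
  covM f g h / (Real.sqrt (varM f g) * Real.sqrt (varM f h))

/-- The first coordinate `X` as a real-valued statistic. -/
def projX : ℕ → ℕ → ℝ := fun x _ => (x : ℝ)

/-- The second coordinate `Y` as a real-valued statistic. -/
def projY : ℕ → ℕ → ℝ := fun _ y => (y : ℝ)

/-- The indicator `1{X > 0}` as a real-valued statistic. -/
def indX : ℕ → ℕ → ℝ := fun x _ => if 0 < x then 1 else 0

/-- The indicator `1{Y > 0}` as a real-valued statistic. -/
def indY : ℕ → ℕ → ℝ := fun _ y => if 0 < y then 1 else 0

/-! ### Auxiliary sums -/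

private def gX (x : ℕ) : ℝ := if x = 0 then 0 else (1 / 6 : ℝ) * (5 / 6) ^ x
private def hAll (y : ℕ) : ℝ := (1 / 7 : ℝ) * (6 / 7) ^ y
private def hY (y : ℕ) : ℝ := if y = 0 then 0 else (1 / 7 : ℝ) * (6 / 7) ^ y

private lemma summable_gX : Summable gX := by
  have h := (summable_geometric_of_lt_one (by norm_num : (0:ℝ) ≤ 5/6) (by norm_num)).mul_left
    (1/6 : ℝ)
  refine Summable.of_nonneg_of_le (fun n => ?_) (fun n => ?_) h
  · unfold gX; split <;> positivity
  · unfold gX; split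
    · positivity
    · exact le_rfl

private lemma summable_hAll : Summable hAll :=
  (summable_geometric_of_lt_one (by norm_num : (0:ℝ) ≤ 6/7) (by norm_num)).mul_left (1/7 : ℝ)

private lemma summable_hY : Summable hY := by
  refine Summable.of_nonneg_of_le (fun n => ?_) (fun n => ?_) summable_hAll
  · unfold hY; split <;> positivity
  · unfold hY hAll; split
    · positivity
    · exact le_rfl

private lemma tsum_gX : ∑' x, gX x = 5 / 6 := by
  have h1 : ∀ n : ℕ, gX (n + 1) = (5/36 : ℝ) * (5/6) ^ n := by
    intro n
    simp only [gX, Nat.succ_ne_zero, if_false, pow_succ]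
    ring
  have h0 : gX 0 = 0 := by simp [gX]
  rw [Summable.tsum_eq_zero_add summable_gX, h0, tsum_congr h1, tsum_mul_left,
    tsum_geometric_of_lt_one (by norm_num) (by norm_num)]
  norm_num

private lemma tsum_hAll : ∑' y, hAll y = 1 := by
  unfold hAll
  rw [tsum_mul_left, tsum_geometric_of_lt_one (by norm_num) (by norm_num)]
  norm_num

private lemma tsum_hY : ∑' y, hY y = 6 / 7 := by
  have h1 : ∀ n : ℕ, hY (n + 1) = (6/49 : ℝ) * (6/7) ^ n := by
    intro n
    simp only [hY, Nat.succ_ne_zero, if_false, pow_succ]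
    ring
  have h0 : hY 0 = 0 := by simp [hY]
  rw [Summable.tsum_eq_zero_add summable_hY, h0, tsum_congr h1, tsum_mul_left,
    tsum_geometric_of_lt_one (by norm_num) (by norm_num)]
  norm_num

/-! ### The diagonal (fH) sum -/

private def FH (p : ℕ × ℕ) : ℝ := if p.1 = p.2 then gX p.1 else 0

private lemma diag_inj : Function.Injective (fun x : ℕ => ((x, x) : ℕ × ℕ)) := by
  intro a b h
  simpa using congrArg Prod.fst h

private lemma FH_support : ∀ p ∉ Set.range (fun x : ℕ => ((x, x) : ℕ × ℕ)), FH p = 0 := by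
  rintro ⟨x, y⟩ hp
  have : x ≠ y := by
    intro h; exact hp ⟨x, by simp [h]⟩
  simp [FH, this]

private lemma summable_FH : Summable FH := by
  have : (FH ∘ fun x : ℕ => ((x, x) : ℕ × ℕ)) = gX := by
    funext x; simp [FH]
  exact (diag_inj.summable_iff FH_support).1 (this ▸ summable_gX)

private lemma tsum_FH : ∑' p : ℕ × ℕ, FH p = 5 / 6 := by
  rw [← diag_inj.tsum_eq (Function.support_subset_iff'.2 FH_support)]
  have h : ∀ c : ℕ, FH (c, c) = gX c := fun c => by simp [FH]
  rw [tsum_congr h]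
  exact tsum_gX

/-! ### Product (fL) sums -/

private lemma abs_summable_of_nonneg {f : ℕ → ℝ} (hf : Summable f) :
    Summable fun x => ‖f x‖ := by simpa [Real.norm_eq_abs] using hf.abs

private def FL1 (p : ℕ × ℕ) : ℝ := gX p.1 * hAll p.2
private def FL2 (p : ℕ × ℕ) : ℝ := gX p.1 * hY p.2

private lemma summable_FL1 : Summable FL1 :=
  summable_mul_of_summable_norm (abs_summable_of_nonneg summable_gX)
    (abs_summable_of_nonneg summable_hAll)

private lemma summable_FL2 : Summable FL2 :=
  summable_mul_of_summable_norm (abs_summable_of_nonneg summable_gX)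
    (abs_summable_of_nonneg summable_hY)

private lemma tsum_FL1 : ∑' p : ℕ × ℕ, FL1 p = 5 / 6 := by
  have := tsum_mul_tsum_of_summable_norm (abs_summable_of_nonneg summable_gX)
    (abs_summable_of_nonneg summable_hAll)
  unfold FL1
  rw [← this, tsum_gX, tsum_hAll]; norm_num

private lemma tsum_FL2 : ∑' p : ℕ × ℕ, FL2 p = 5 / 7 := by
  have := tsum_mul_tsum_of_summable_norm (abs_summable_of_nonneg summable_gX)
    (abs_summable_of_nonneg summable_hY)
  unfold FL2
  rw [← this, tsum_gX, tsum_hY]; norm_num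

/-! ### Pointwise identities -/

private lemma indX_fH (x y : ℕ) : indX x y * fH x y = FH (x, y) := by
  by_cases hxy : x = y <;> by_cases hx : x = 0
  · subst hxy hx; simp [indX, fH, FH, gX]
  · subst hxy; simp [indX, fH, FH, gX, hx, Nat.pos_of_ne_zero hx]
  · simp [indX, fH, FH, hxy]
  · simp [indX, fH, FH, hxy]

private lemma indY_fH (x y : ℕ) : indY x y * fH x y = FH (x, y) := by
  by_cases hxy : x = y <;> by_cases hx : x = 0
  · subst hxy hx; simp [indY, fH, FH, gX]
  · subst hxy; simp [indY, fH, FH, gX, hx, Nat.pos_of_ne_zero hx]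
  · simp [indY, fH, FH, hxy]
  · simp [indY, fH, FH, hxy]

private lemma indXY_fH (x y : ℕ) : indX x y * indY x y * fH x y = FH (x, y) := by
  by_cases hxy : x = y <;> by_cases hx : x = 0
  · subst hxy hx; simp [indX, indY, fH, FH, gX]
  · subst hxy; simp [indX, indY, fH, FH, gX, hx, Nat.pos_of_ne_zero hx]
  · simp [indX, indY, fH, FH, hxy]
  · simp [indX, indY, fH, FH, hxy]

private lemma indX_fL (x y : ℕ) : indX x y * fL x y = FL1 (x, y) := by
  by_cases hx : x = 0
  · subst hx; simp [indX, fL, FL1, gX]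
  · simp [indX, fL, FL1, gX, hAll, hx, Nat.pos_of_ne_zero hx]

private lemma indY_fL (x y : ℕ) : indY x y * fL x y = FL2 (x, y) := by
  by_cases hx : x = 0 <;> by_cases hy : y = 0
  · subst hx hy; simp [indY, fL, FL2, gX, hY]
  · subst hx; simp [indY, fL, FL2, gX, hY, hy]
  · subst hy; simp [indY, fL, FL2, gX, hY, hx]
  · simp [indY, fL, FL2, gX, hY, hx, hy, Nat.pos_of_ne_zero hy]

private lemma indXY_fL (x y : ℕ) : indX x y * indY x y * fL x y = FL2 (x, y) := by
  by_cases hx : x = 0 <;> by_cases hy : y = 0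
  · subst hx hy; simp [indX, indY, fL, FL2, gX, hY]
  · subst hx; simp [indX, indY, fL, FL2, gX, hY, hy]
  · subst hy; simp [indX, indY, fL, FL2, gX, hY, hx]
  · simp [indX, indY, fL, FL2, gX, hY, hx, hy, Nat.pos_of_ne_zero hx,
      Nat.pos_of_ne_zero hy]

/-! ### Expectations -/

private lemma Emom_split (w : ℕ → ℕ → ℝ) (A B : ℕ × ℕ → ℝ)
    (hA : ∀ x y, w x y * fH x y = A (x, y)) (hB : ∀ x y, w x y * fL x y = B (x, y))
    (hAs : Summable A) (hBs : Summable B) :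
    Emom fM w = (1/2) * (∑' p, A p) + (1/2) * (∑' p, B p) := by
  unfold Emom fM
  have hpt : ∀ p : ℕ × ℕ, w p.1 p.2 * ((1/2) * fH p.1 p.2 + (1/2) * fL p.1 p.2)
      = (1/2) * A p + (1/2) * B p := by
    rintro ⟨x, y⟩
    have h1 := hA x y
    have h2 := hB x y
    simp only
    nlinarith [h1, h2]
  rw [tsum_congr hpt, Summable.tsum_add (hAs.mul_left _) (hBs.mul_left _), tsum_mul_left, tsum_mul_left]

private lemma Emom_indX : Emom fM indX = 5 / 6 := by
  rw [Emom_split indX FH FL1 indX_fH indX_fL summable_FH summable_FL1, tsum_FH, tsum_FL1]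
  norm_num

private lemma Emom_indY : Emom fM indY = 65 / 84 := by
  rw [Emom_split indY FH FL2 indY_fH indY_fL summable_FH summable_FL2, tsum_FH, tsum_FL2]
  norm_num

private lemma Emom_indXY : Emom fM (fun x y => indX x y * indY x y) = 65 / 84 := by
  rw [Emom_split _ FH FL2 indXY_fH indXY_fL summable_FH summable_FL2, tsum_FH, tsum_FL2]
  norm_num

private lemma indX_sq : (fun x y => indX x y ^ 2) = indX := by
  funext x y; simp only [indX]; split <;> norm_num

private lemma indY_sq : (fun x y => indY x y ^ 2) = indY := by
  funext x y; simp only [indY]; split <;> norm_num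

/-- Under `f^M`, the Pearson correlation of the indicators `1{X>0}` and `1{Y>0}`
equals `√(13/19) = 13/√247`. -/
theorem fM_indicator_correlation :
    pearson fM indX indY = Real.sqrt (13 / 19) ∧
    Real.sqrt (13 / 19) = 13 / Real.sqrt 247 := by
  constructor
  · have hcov : covM fM indX indY = 65 / 504 := by
      unfold covM
      rw [Emom_indXY, Emom_indX, Emom_indY]; norm_num
    have hvx : varM fM indX = 5 / 36 := by
      unfold varM
      rw [indX_sq, Emom_indX]; norm_num
    have hvy : varM fM indY = 1235 / 7056 := by
      unfold varM
      rw [indY_sq, Emom_indY]; norm_num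
    unfold pearson
    rw [hcov, hvx, hvy, ← Real.sqrt_mul (by norm_num : (0:ℝ) ≤ 5/36),
      show (5/36 : ℝ) * (1235/7056) = 6175/254016 by norm_num,
      div_eq_iff (ne_of_gt (Real.sqrt_pos.2 (by norm_num))),
      ← Real.sqrt_mul (by norm_num : (0:ℝ) ≤ 13/19),
      show (13/19 : ℝ) * (6175/254016) = (65/504)^2 by norm_num,
      Real.sqrt_sq (by norm_num)]
  · rw [eq_div_iff (ne_of_gt (Real.sqrt_pos.2 (by norm_num))),
      ← Real.sqrt_mul (by norm_num : (0:ℝ) ≤ 13/19),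
      show (13/19 : ℝ) * 247 = 13^2 by norm_num,
      Real.sqrt_sq (by norm_num)]


end DelayedClaims
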